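/- Let D ⊆ [0,1] and let f : D → ℝ be summable with integral I. If I > 0, then there exists a point ξ ∈ D with f(ξ) > 0. -/

import Mathlib

open MeasureTheory Filter Set

noncomputable section

/-- A sequence of functions on `[0,1]` is *regular* if each member is continuous and
nonnegative on `[0,1]` and has integral over `[0,1]` strictly less than `2⁻ⁿ`. -/
def RegularSeq (h : ℕ → ℝ → ℝ) : Prop :=
  ∀ n : ℕ, ContinuousOn (h n) (Set.Icc 0 1) ∧
    (∀ x ∈ Set.Icc (0:ℝ) 1, 0 ≤ h n x) ∧
    (∫ x in (0:ℝ)..1, h n x) < (1/2 : ℝ) ^ n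

/-- The set `Ω(𝔥)` of points of `[0,1]` at which the partial sums of `∑ hₙ(x)` are
bounded above. -/
def Omega (h : ℕ → ℝ → ℝ) : Set ℝ :=
  {x ∈ Set.Icc (0:ℝ) 1 | ∃ γ : ℝ, ∀ m : ℕ, ∑ n ∈ Finset.range (m+1), h n x ≤ γ}

/-- A subset `X ⊆ [0,1]` is *almost full* if `Ω(𝔥) ⊆ X` for some regular sequence `𝔥`. -/
def AlmostFull (X : Set ℝ) : Prop :=
  ∃ h : ℕ → ℝ → ℝ, RegularSeq h ∧ Omega h ⊆ X

/-- `f : D → ℝ` is *summable with integral `I`* if there are an almost full set `Y ⊆ D`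
and continuous functions `Fₙ` on `[0,1]` with `∫₀¹ |Fₙ₊₁ - Fₙ| < 2⁻ⁿ`, `Fₙ(x) → f(x)`
on `Y`, and `∫₀¹ Fₙ → I`. -/
def SummableWithIntegral (D : Set ℝ) (f : ℝ → ℝ) (I : ℝ) : Prop :=
  ∃ (Y : Set ℝ) (F : ℕ → ℝ → ℝ),
    AlmostFull Y ∧ Y ⊆ D ∧
    (∀ n : ℕ, ContinuousOn (F n) (Set.Icc 0 1)) ∧
    (∀ n : ℕ, (∫ x in (0:ℝ)..1, |F (n+1) x - F n x|) < (1/2 : ℝ) ^ n) ∧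
    (∀ x ∈ Y, Tendsto (fun n => F n x) atTop (nhds (f x))) ∧
    Tendsto (fun n => ∫ x in (0:ℝ)..1, F n x) atTop (nhds I)

/-!
Almost full sets have full Lebesgue measure in `[0,1]`: a series of nonnegative functions with
summable integrals converges almost everywhere. Likewise the telescoping series
`F₀ + ∑ (Fₙ₊₁ - Fₙ)` has summable `L¹` norms, so it converges almost everywhere (to `f`) and may be
integrated termwise; hence `∫₀¹ f = lim ∫₀¹ Fₙ = I > 0`. Since `D` has full measure, `f` cannot be
nonpositive on all of `D`.
-/

open Topology

namespace MeasureTheory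

variable {α E : Type*} [MeasurableSpace α] {μ : Measure α} [NormedAddCommGroup E]

theorem ae_summable_norm_of_summable_integral_norm {ι : Type*} [Countable ι] {g : ι → α → E}
    (hg : ∀ i, Integrable (g i) μ) (hsum : Summable fun i ↦ ∫ a, ‖g i a‖ ∂μ) :
    ∀ᵐ a ∂μ, Summable fun i ↦ ‖g i a‖ := by
  refine summable_norm_of_tsum_eLpNorm_ne_top le_rfl (fun i ↦ (hg i).1) ?_
  simp_rw [eLpNorm_one_eq_lintegral_enorm, ← ofReal_integral_norm_eq_lintegral_enorm (hg _),
    ← ENNReal.ofReal_tsum_of_nonneg (fun i ↦ integral_nonneg fun a ↦ norm_nonneg (g i a)) hsum]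
  exact ENNReal.ofReal_ne_top

variable [NormedSpace ℝ E]

theorem tendsto_integral_of_summable_integral_norm_sub {F : ℕ → α → E} {f : α → E}
    (hF : ∀ n, Integrable (F n) μ)
    (hsum : Summable fun n ↦ ∫ a, ‖F (n + 1) a - F n a‖ ∂μ)
    (hlim : ∀ᵐ a ∂μ, Tendsto (F · a) atTop (𝓝 (f a))) :
    Tendsto (fun n ↦ ∫ a, F n a ∂μ) atTop (𝓝 (∫ a, f a ∂μ)) := by
  -- `F n` is the `(n+1)`-st partial sum of the series `∑ G k`
  set G : ℕ → α → E := fun k ↦ if k = 0 then F 0 else F k - F (k - 1) with hG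
  have hG_succ (k : ℕ) : G (k + 1) = F (k + 1) - F k := by simp [hG]
  have hG_partial (n : ℕ) : ∑ k ∈ Finset.range (n + 1), G k = F n := by
    simp_rw [Finset.sum_range_succ', hG_succ, Finset.sum_range_sub]
    simp [hG]
  have hG_int (k : ℕ) : Integrable (G k) μ := by
    cases k with
    | zero => simpa [hG] using hF 0
    | succ k => simpa [hG_succ] using (hF (k + 1)).sub (hF k)
  have hG_sum : Summable fun k ↦ ∫ a, ‖G k a‖ ∂μ := by
    rw [← summable_nat_add_iff 1]
    simpa [hG_succ] using hsum
  have hG_hasSum : ∀ᵐ a ∂μ, HasSum (G · a) (f a) := by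
    filter_upwards [ae_summable_norm_of_summable_integral_norm hG_int hG_sum, hlim]
      with a hsa hla
    refine (hasSum_iff_tendsto_nat_of_summable_norm hsa).2 ((tendsto_add_atTop_iff_nat 1).1 ?_)
    simpa only [← Finset.sum_apply, hG_partial] using hla
  have hlim_int := (tendsto_add_atTop_iff_nat 1).2
    (hasSum_integral_of_summable_integral_norm hG_int hG_sum).tendsto_sum_nat
  rw [integral_congr_ae (hG_hasSum.mono fun a ha ↦ ha.tsum_eq)] at hlim_int
  simpa only [← integral_finsetSum _ fun k _ ↦ hG_int k, ← Finset.sum_apply, hG_partial]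
    using hlim_int

end MeasureTheory

theorem intervalIntegral_zero_one_eq_setIntegral_Icc (g : ℝ → ℝ) :
    ∫ x in (0 : ℝ)..1, g x = ∫ x in Icc 0 1, g x := by
  rw [intervalIntegral.integral_of_le zero_le_one, integral_Icc_eq_integral_Ioc]

theorem RegularSeq.ae_mem_omega {h : ℕ → ℝ → ℝ} (hh : RegularSeq h) :
    ∀ᵐ x ∂volume.restrict (Icc (0 : ℝ) 1), x ∈ Omega h := by
  have hint (n : ℕ) : Integrable (h n) (volume.restrict (Icc 0 1)) :=
    (hh n).1.integrableOn_Icc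
  have hsum : Summable fun n ↦ ∫ x in Icc 0 1, ‖h n x‖ := by
    refine summable_geometric_two.of_nonneg_of_le
      (fun n ↦ integral_nonneg fun _ ↦ norm_nonneg _) fun n ↦ ?_
    rw [setIntegral_congr_fun measurableSet_Icc fun x hx ↦ Real.norm_of_nonneg ((hh n).2.1 x hx),
      ← intervalIntegral_zero_one_eq_setIntegral_Icc]
    exact (hh n).2.2.le
  filter_upwards [ae_summable_norm_of_summable_integral_norm hint hsum,
    ae_restrict_mem measurableSet_Icc] with x hsum_x hx
  refine ⟨hx, ∑' n, ‖h n x‖, fun m ↦ ?_⟩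
  calc ∑ n ∈ Finset.range (m + 1), h n x ≤ ∑ n ∈ Finset.range (m + 1), ‖h n x‖ :=
        Finset.sum_le_sum fun n _ ↦ Real.le_norm_self _
    _ ≤ ∑' n, ‖h n x‖ := hsum_x.sum_le_tsum _ fun n _ ↦ norm_nonneg _

theorem AlmostFull.ae_mem {X : Set ℝ} (hX : AlmostFull X) :
    ∀ᵐ x ∂volume.restrict (Icc (0 : ℝ) 1), x ∈ X :=
  let ⟨_, hh, hsub⟩ := hX
  hh.ae_mem_omega.mono fun _ hx ↦ hsub hx

namespace SummableWithIntegral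

variable {D : Set ℝ} {f : ℝ → ℝ} {I : ℝ}

theorem ae_mem (hf : SummableWithIntegral D f I) :
    ∀ᵐ x ∂volume.restrict (Icc (0 : ℝ) 1), x ∈ D :=
  let ⟨_, _, hY, hYD, _⟩ := hf
  hY.ae_mem.mono fun _ hx ↦ hYD hx

theorem setIntegral_Icc_eq (hf : SummableWithIntegral D f I) :
    ∫ x in Icc 0 1, f x = I := by
  obtain ⟨Y, F, hY, -, hF_cont, hF_diff, hF_lim, hF_int⟩ := hf
  have hint (n : ℕ) : Integrable (F n) (volume.restrict (Icc 0 1)) :=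
    (hF_cont n).integrableOn_Icc
  have hsum : Summable fun n ↦ ∫ x in Icc 0 1, ‖F (n + 1) x - F n x‖ := by
    refine summable_geometric_two.of_nonneg_of_le
      (fun n ↦ integral_nonneg fun _ ↦ norm_nonneg _) fun n ↦ ?_
    simpa only [Real.norm_eq_abs, intervalIntegral_zero_one_eq_setIntegral_Icc]
      using (hF_diff n).le
  have hlim : ∀ᵐ x ∂volume.restrict (Icc (0 : ℝ) 1), Tendsto (F · x) atTop (𝓝 (f x)) :=
    hY.ae_mem.mono hF_lim
  refine tendsto_nhds_unique (tendsto_integral_of_summable_integral_norm_sub hint hsum hlim) ?_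
  simpa only [intervalIntegral_zero_one_eq_setIntegral_Icc] using hF_int

end SummableWithIntegral

theorem stmt9_general (D : Set ℝ) (f : ℝ → ℝ) (I : ℝ)
    (hf : SummableWithIntegral D f I) (hI : 0 < I) :
    ∃ ξ ∈ D, 0 < f ξ := by
  by_contra! hf_nonpos
  have : ∫ x in Icc 0 1, f x ≤ 0 :=
    integral_nonpos_of_ae (hf.ae_mem.mono fun x hx ↦ hf_nonpos x hx)
  linarith [hf.setIntegral_Icc_eq]

/-- If `f : D → ℝ` is summable with a strictly positive integral, then `f` is strictly
positive at some point of `D`. -/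
theorem stmt9 (D : Set ℝ) (hD : D ⊆ Set.Icc 0 1) (f : ℝ → ℝ) (I : ℝ)
    (hf : SummableWithIntegral D f I) (hI : 0 < I) :
    ∃ ξ ∈ D, 0 < f ξ :=
  stmt9_general D f I hf hI
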